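/- Let N, S, K be positive integers, let A_1,...,A_S be real N×K matrices, let B and B̂ be real N×N matrices, let a, â ∈ ℝ^N, let τ ∈ ℝ^K, and for each s = 1,...,S let Y_s(0) ∈ ℝ^N and set Y_s = Y_s(0) + A_s τ and u_s = Y_s(0) − a − B·Y_s(0). Write M̂ = (I − B̂)ᵀ(I − B̂) and suppose Σ_{s=1}^S A_sᵀ M̂ A_s is invertible. Then the vector τ̂ = (Σ_{s=1}^S A_sᵀ M̂ A_s)^{-1} Σ_{s=1}^S A_sᵀ (I − B̂)ᵀ((I − B̂)Y_s − â) satisfies the exact decomposition τ̂ = τ + (Σ_{s=1}^S A_sᵀ M̂ A_s)^{-1} Σ_{s=1}^S A_sᵀ (I − B̂)ᵀ( u_s + (B − B̂)Y_s(0) + (a − â) ). -/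

import Mathlib

open Matrix

noncomputable def euclNorm {n : ℕ} (x : Fin n → ℝ) : ℝ := Real.sqrt (∑ i, x i ^ 2)

noncomputable def frobNorm {m n : ℕ} (A : Matrix (Fin m) (Fin n) ℝ) : ℝ :=
  Real.sqrt (∑ i, ∑ j, A i j ^ 2)

/-!
Substituting `Yₛ = Yₛ(0) + Aₛτ` into the normal equations splits the residual `(I − B̂)Yₛ − â`
into `(I − B̂)Aₛτ`, which the Gram matrix `Σₛ Aₛᵀ M̂ Aₛ` turns back into `τ` after inversion,
and `(I − B̂)Yₛ(0) − â = uₛ + (B − B̂)Yₛ(0) + (a − â)`.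
-/

namespace Matrix

variable {ι n k R : Type*} [Fintype n] [Fintype k] [CommRing R]

lemma one_sub_mulVec_sub_eq [DecidableEq n] (B B' : Matrix n n R) (y a a' : n → R) :
    (1 - B') *ᵥ y - a' = (y - a - B *ᵥ y) + (B - B') *ᵥ y + (a - a') := by
  rw [sub_mulVec, sub_mulVec, one_mulVec]
  abel

lemma sum_transpose_mulVec_gram_add (s : Finset ι) (A : ι → Matrix n k R) (P : Matrix n n R)
    (x : k → R) (r : ι → n → R) :
    ∑ i ∈ s, (A i)ᵀ *ᵥ (Pᵀ *ᵥ (P *ᵥ (A i *ᵥ x) + r i)) =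
      (∑ i ∈ s, (A i)ᵀ * (Pᵀ * P) * A i) *ᵥ x + ∑ i ∈ s, (A i)ᵀ *ᵥ (Pᵀ *ᵥ r i) := by
  rw [sum_mulVec, ← Finset.sum_add_distrib]
  refine Finset.sum_congr rfl fun i _ => ?_
  simp only [mulVec_add, mulVec_mulVec, Matrix.mul_assoc]

lemma nonsing_inv_mulVec_mulVec_add [DecidableEq k] {G : Matrix k k R} (hG : IsUnit G.det)
    (x e : k → R) : G⁻¹ *ᵥ (G *ᵥ x + e) = x + G⁻¹ *ᵥ e := by
  rw [mulVec_add, mulVec_mulVec, nonsing_inv_mul G hG, one_mulVec]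

end Matrix

theorem stmt0_general (N S K : ℕ)
    (A : Fin S → Matrix (Fin N) (Fin K) ℝ)
    (B Bhat : Matrix (Fin N) (Fin N) ℝ)
    (a ahat : Fin N → ℝ) (τ : Fin K → ℝ)
    (Y0 : Fin S → Fin N → ℝ)
    (Y : Fin S → Fin N → ℝ) (hY : ∀ s, Y s = Y0 s + A s *ᵥ τ)
    (u : Fin S → Fin N → ℝ) (hu : ∀ s, u s = Y0 s - a - B *ᵥ Y0 s)
    (Mhat : Matrix (Fin N) (Fin N) ℝ) (hMhat : Mhat = (1 - Bhat)ᵀ * (1 - Bhat))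
    (hinv : IsUnit (∑ s, (A s)ᵀ * Mhat * A s).det)
    (τhat : Fin K → ℝ)
    (hτhat : τhat = (∑ s, (A s)ᵀ * Mhat * A s)⁻¹ *ᵥ
      (∑ s, (A s)ᵀ *ᵥ ((1 - Bhat)ᵀ *ᵥ ((1 - Bhat) *ᵥ Y s - ahat)))) :
    τhat = τ + (∑ s, (A s)ᵀ * Mhat * A s)⁻¹ *ᵥ
      (∑ s, (A s)ᵀ *ᵥ ((1 - Bhat)ᵀ *ᵥ (u s + (B - Bhat) *ᵥ Y0 s + (a - ahat)))) := by
  subst hτhat hMhat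
  have hresidual : ∀ s, (1 - Bhat) *ᵥ Y s - ahat =
      (1 - Bhat) *ᵥ (A s *ᵥ τ) + (u s + (B - Bhat) *ᵥ Y0 s + (a - ahat)) := by
    intro s
    rw [hY, hu, mulVec_add, ← one_sub_mulVec_sub_eq B Bhat (Y0 s) a ahat]
    abel
  simp only [hresidual]
  rw [sum_transpose_mulVec_gram_add, nonsing_inv_mulVec_mulVec_add hinv]

/-- The key algebraic decomposition of the staggered synthetic control estimator:
`τ̂ = τ + (Σₛ Aₛᵀ M̂ Aₛ)⁻¹ Σₛ Aₛᵀ (I − B̂)ᵀ (uₛ + (B − B̂)Yₛ(0) + (a − â))`. -/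
theorem stmt0 (N S K : ℕ) (hN : 0 < N) (hS : 0 < S) (hK : 0 < K)
    (A : Fin S → Matrix (Fin N) (Fin K) ℝ)
    (B Bhat : Matrix (Fin N) (Fin N) ℝ)
    (a ahat : Fin N → ℝ) (τ : Fin K → ℝ)
    (Y0 : Fin S → Fin N → ℝ)
    (Y : Fin S → Fin N → ℝ) (hY : ∀ s, Y s = Y0 s + A s *ᵥ τ)
    (u : Fin S → Fin N → ℝ) (hu : ∀ s, u s = Y0 s - a - B *ᵥ Y0 s)
    (Mhat : Matrix (Fin N) (Fin N) ℝ) (hMhat : Mhat = (1 - Bhat)ᵀ * (1 - Bhat))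
    (hinv : IsUnit (∑ s, (A s)ᵀ * Mhat * A s).det)
    (τhat : Fin K → ℝ)
    (hτhat : τhat = (∑ s, (A s)ᵀ * Mhat * A s)⁻¹ *ᵥ
      (∑ s, (A s)ᵀ *ᵥ ((1 - Bhat)ᵀ *ᵥ ((1 - Bhat) *ᵥ Y s - ahat)))) :
    τhat = τ + (∑ s, (A s)ᵀ * Mhat * A s)⁻¹ *ᵥ
      (∑ s, (A s)ᵀ *ᵥ ((1 - Bhat)ᵀ *ᵥ (u s + (B - Bhat) *ᵥ Y0 s + (a - ahat)))) :=
  stmt0_general N S K A B Bhat a ahat τ Y0 Y hY u hu Mhat hMhat hinv τhat hτhat
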